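/- Fix positive flows q_e > 0 on a finite nonempty edge set E, a constant C > 0, and an exponent 0 < γ < 1. Among all conductance assignments κ_e > 0 satisfying ∑_e κ_e^γ = C, the dissipation D(κ) = ∑_e q_e²/κ_e is minimized by κ_e = C^{1/γ} · q_e^{2/(γ+1)} / (∑_f q_f^{2γ/(γ+1)})^{1/γ}, and the minimum value of the dissipation equals (∑_e q_e^{2γ/(γ+1)})^{1+1/γ} / C^{1/γ}. -/

import Mathlib

/-!
Hölder's inequality with exponents `(γ + 1) / γ` and `γ + 1`, applied to
`(q_e² / κ_e) ^ (γ / (γ + 1))` and `κ_e ^ (γ / (γ + 1))`, whose product `q_e ^ (2γ / (γ + 1))`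
does not depend on `κ`, gives
`(∑ q_e ^ (2γ / (γ + 1))) ^ (1 + 1 / γ) ≤ D(κ) · (∑ κ_e ^ γ) ^ (1 / γ)` for every `κ > 0`.
Under the constraint the right-hand side is `D(κ) · C ^ (1 / γ)`. The proposed conductances attain
equality: for them both `q_e² / κ_e` and `κ_e ^ γ` are proportional to `q_e ^ (2γ / (γ + 1))`.
-/

open Finset Real

theorem Real.sum_rpow_mul_rpow_le_of_nonneg {ι : Type*} (s : Finset ι) {x y : ι → ℝ} {θ : ℝ}
    (hθ₀ : 0 < θ) (hθ₁ : θ < 1) (hx : ∀ i ∈ s, 0 ≤ x i) (hy : ∀ i ∈ s, 0 ≤ y i) :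
    ∑ i ∈ s, x i ^ θ * y i ^ (1 - θ) ≤ (∑ i ∈ s, x i) ^ θ * (∑ i ∈ s, y i) ^ (1 - θ) := by
  have hθ₁' : 1 - θ ≠ 0 := by linarith
  have holder := inner_le_Lp_mul_Lq_of_nonneg s (HolderConjugate.inv_one_sub_inv hθ₀ hθ₁)
    (fun i hi => rpow_nonneg (hx i hi) θ) (fun i hi => rpow_nonneg (hy i hi) (1 - θ))
  rwa [sum_congr rfl fun i hi => rpow_rpow_inv (hx i hi) hθ₀.ne',
    sum_congr rfl fun i hi => rpow_rpow_inv (hy i hi) hθ₁', one_div, inv_inv, one_div,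
    inv_inv] at holder

theorem rpow_sum_le_sum_sq_div_mul_rpow_sum {ι : Type*} (s : Finset ι) {q κ : ι → ℝ} {γ : ℝ}
    (hγ : 0 < γ) (hq : ∀ i ∈ s, 0 ≤ q i) (hκ : ∀ i ∈ s, 0 < κ i) :
    (∑ i ∈ s, q i ^ (2 * γ / (γ + 1))) ^ (1 + 1 / γ) ≤
      (∑ i ∈ s, q i ^ 2 / κ i) * (∑ i ∈ s, κ i ^ γ) ^ (1 / γ) := by
  set θ := γ / (γ + 1) with hθ
  have hθ₀ : 0 < θ := by positivity
  have hθ₁ : θ < 1 := (div_lt_one (by linarith)).2 (by linarith)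
  have hterm : ∀ i ∈ s, (q i ^ 2 / κ i) ^ θ * (κ i ^ γ) ^ (1 - θ) = q i ^ (2 * γ / (γ + 1)) := by
    intro i hi
    have hκi := hκ i hi
    have : γ * (1 - θ) = θ := by rw [hθ]; field_simp; ring
    rw [← rpow_mul hκi.le, this, ← mul_rpow (by have := hq i hi; positivity) hκi.le,
      div_mul_cancel₀ _ hκi.ne', ← rpow_natCast, ← rpow_mul (hq i hi)]
    congr 1
    rw [hθ]; push_cast; ring
  have holder := Real.sum_rpow_mul_rpow_le_of_nonneg s (x := fun i => q i ^ 2 / κ i) hθ₀ hθ₁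
    (fun i hi => by have := hq i hi; have := hκ i hi; positivity)
    (fun i hi => (rpow_pos_of_pos (hκ i hi) γ).le)
  rw [sum_congr rfl hterm] at holder
  have hS : 0 ≤ ∑ i ∈ s, q i ^ (2 * γ / (γ + 1)) :=
    sum_nonneg fun i hi => rpow_nonneg (hq i hi) _
  have hD : 0 ≤ ∑ i ∈ s, q i ^ 2 / κ i :=
    sum_nonneg fun i hi => by have := hq i hi; have := hκ i hi; positivity
  have hK : 0 ≤ ∑ i ∈ s, κ i ^ γ := sum_nonneg fun i hi => (rpow_pos_of_pos (hκ i hi) γ).le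
  have hθinv : θ⁻¹ = 1 + 1 / γ := by rw [hθ]; field_simp
  calc (∑ i ∈ s, q i ^ (2 * γ / (γ + 1))) ^ (1 + 1 / γ)
      ≤ ((∑ i ∈ s, q i ^ 2 / κ i) ^ θ * (∑ i ∈ s, κ i ^ γ) ^ (1 - θ)) ^ θ⁻¹ := by
        rw [hθinv]; gcongr
    _ = (∑ i ∈ s, q i ^ 2 / κ i) * (∑ i ∈ s, κ i ^ γ) ^ (1 / γ) := by
        rw [mul_rpow (by positivity) (by positivity), rpow_rpow_inv hD hθ₀.ne', ← rpow_mul hK]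
        congr 2
        rw [hθ]; field_simp; ring

theorem murray_conductance_rpow {c a S γ : ℝ} (hc : 0 ≤ c) (ha : 0 ≤ a) (hS : 0 ≤ S) (hγ : γ ≠ 0) :
    (c ^ (1 / γ) * a ^ (2 / (γ + 1)) / S ^ (1 / γ)) ^ γ = c * a ^ (2 * γ / (γ + 1)) / S := by
  rw [div_rpow (by positivity) (by positivity), mul_rpow (by positivity) (by positivity),
    one_div, rpow_inv_rpow hc hγ, rpow_inv_rpow hS hγ, ← rpow_mul ha]
  ring_nf

theorem sq_div_murray_conductance {c a S γ : ℝ} (hc : 0 ≤ c) (ha : 0 < a) (hS : 0 ≤ S)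
    (hγ : γ + 1 ≠ 0) :
    a ^ 2 / (c ^ (1 / γ) * a ^ (2 / (γ + 1)) / S ^ (1 / γ)) =
      (S / c) ^ (1 / γ) * a ^ (2 * γ / (γ + 1)) := by
  have hexp : 2 * γ / (γ + 1) = 2 - 2 / (γ + 1) := by field_simp; ring
  rw [hexp, rpow_sub ha, rpow_two, div_rpow hS hc]
  field_simp

open Finset in
theorem murrays_law_general {E : Type*} [Fintype E] [Nonempty E]
    (q : E → ℝ) (hq : ∀ e, 0 < q e) (C γ : ℝ) (hC : 0 < C) (hγ0 : 0 < γ)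
    (κopt : E → ℝ)
    (hκopt : ∀ e, κopt e =
      C ^ (1/γ) * (q e) ^ (2/(γ+1)) / (∑ f : E, (q f) ^ (2*γ/(γ+1))) ^ (1/γ)) :
    (∀ e, 0 < κopt e) ∧ (∑ e : E, (κopt e) ^ γ = C) ∧
    (∀ κ : E → ℝ, (∀ e, 0 < κ e) → (∑ e : E, (κ e) ^ γ = C) →
      ∑ e : E, (q e)^2 / κopt e ≤ ∑ e : E, (q e)^2 / κ e) ∧
    (∑ e : E, (q e)^2 / κopt e =
      (∑ e : E, (q e) ^ (2*γ/(γ+1))) ^ (1 + 1/γ) / C ^ (1/γ)) := by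
  set S := ∑ f : E, q f ^ (2 * γ / (γ + 1))
  have hS : 0 < S := sum_pos (fun f _ => rpow_pos_of_pos (hq f) _) univ_nonempty
  have hvalue : ∑ e : E, q e ^ 2 / κopt e = S ^ (1 + 1 / γ) / C ^ (1 / γ) := by
    simp_rw [hκopt, sq_div_murray_conductance hC.le (hq _) hS.le (by positivity : γ + 1 ≠ 0)]
    rw [← mul_sum, div_rpow hS.le hC.le, rpow_add hS, rpow_one]
    ring
  refine ⟨fun e => ?_, ?_, fun κ hκ hκC => ?_, hvalue⟩
  · rw [hκopt e]
    have := hq e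
    positivity
  · simp_rw [hκopt, murray_conductance_rpow hC.le (hq _).le hS.le hγ0.ne']
    rw [← sum_div, ← mul_sum, mul_div_assoc, div_self hS.ne', mul_one]
  · rw [hvalue, div_le_iff₀ (by positivity), ← hκC]
    exact rpow_sum_le_sum_sq_div_mul_rpow_sum univ hγ0 (fun e _ => (hq e).le) fun e _ => hκ e

open Finset in
/-- Murray's law: the dissipation-minimizing conductances under the material
constraint `∑ κ^γ = C`, and the minimal dissipation value. -/
theorem murrays_law {E : Type*} [Fintype E] [Nonempty E]
    (q : E → ℝ) (hq : ∀ e, 0 < q e) (C γ : ℝ) (hC : 0 < C) (hγ0 : 0 < γ) (hγ1 : γ < 1)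
    (κopt : E → ℝ)
    (hκopt : ∀ e, κopt e =
      C ^ (1/γ) * (q e) ^ (2/(γ+1)) / (∑ f : E, (q f) ^ (2*γ/(γ+1))) ^ (1/γ)) :
    (∀ e, 0 < κopt e) ∧ (∑ e : E, (κopt e) ^ γ = C) ∧
    (∀ κ : E → ℝ, (∀ e, 0 < κ e) → (∑ e : E, (κ e) ^ γ = C) →
      ∑ e : E, (q e)^2 / κopt e ≤ ∑ e : E, (q e)^2 / κ e) ∧
    (∑ e : E, (q e)^2 / κopt e =
      (∑ e : E, (q e) ^ (2*γ/(γ+1))) ^ (1 + 1/γ) / C ^ (1/γ)) :=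
  murrays_law_general q hq C γ hC hγ0 κopt hκopt
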